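/- Let K = Q(√D) with D squarefree, D ∉ {0,1}, n ≥ 1 and d ≥ 0. The generalized polynomials g_{ij} defined by g_{ij}(z) = z^i τ(z)^j + τ(z)^i z^j and g_{ji}(z) = √D(z^i τ(z)^j − τ(z)^i z^j) for multi-indices i < j (lexicographically), together with g_{ii}(z) = z^i τ(z)^i, for all multi-indices with |i| + |j| ≤ d, form a basis of the Q-vector space of Q-valued generalized polynomials in n variables of degree at most d. -/

import Mathlib

/-!
The variables `(r, false)` and `(r, true)` stand for `z_r` and `τ(z_r)`. Applying `τ` to the
coefficients and swapping the two kinds of variables is an involution `conjPoly τ` which turns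
the values `g(a, τ a)` into `τ (g(a, τ a))`. The points `(a, τ a)` are Zariski dense (substitute
`a = u + v √D` with `u, v` rational), so `g` is ℚ-valued exactly when `conjPoly τ g = g`.
Such a `g` is half the sum of the symmetrizations `m + conjPoly τ m` of its monomials `m`, and
writing the coefficient of `m` as `p + q √D` makes each symmetrization a rational combination of
at most two of the `g_{ij}`. Linear independence is read off from the coefficient of
`z^i τ(z)^j`, since `1` and `√D` are linearly independent over ℚ.
-/

open MvPolynomial

theorem MvPolynomial.eq_zero_of_eval_algebraMap_eq_zero {R σ : Type*} [CommRing R] [IsDomain R]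
    [Algebra ℚ R] {p : MvPolynomial σ R} (hp : ∀ v : σ → ℚ, eval (algebraMap ℚ R ∘ v) p = 0) :
    p = 0 := by
  refine funext_set (fun _ => Set.range (algebraMap ℚ R))
    (fun _ => Set.infinite_range_of_injective (algebraMap ℚ R).injective) fun x hx => ?_
  choose v hv using fun i => hx i (Set.mem_univ i)
  rw [map_zero, show x = algebraMap ℚ R ∘ v from _root_.funext fun i => (hv i).symm, hp]

section Quadratic

variable {K : Type*} [Field K] [Algebra ℚ K]

structure IsQuadraticConjugation (sd : K) (τ : K →ₐ[ℚ] K) : Prop where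
  exists_eq : ∀ x : K, ∃ p q : ℚ, x = algebraMap ℚ K p + algebraMap ℚ K q * sd
  map_sd : τ sd = -sd
  ne_zero : sd ≠ 0

namespace IsQuadraticConjugation

variable {sd : K} {τ : K →ₐ[ℚ] K}

theorem map_add_mul (h : IsQuadraticConjugation sd τ) (p q : ℚ) :
    τ (algebraMap ℚ K p + algebraMap ℚ K q * sd) = algebraMap ℚ K p - algebraMap ℚ K q * sd := by
  rw [map_add, map_mul, h.map_sd, AlgHom.commutes, AlgHom.commutes, mul_neg, sub_eq_add_neg]

theorem involutive (h : IsQuadraticConjugation sd τ) : Function.Involutive τ := by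
  intro x
  obtain ⟨p, q, rfl⟩ := h.exists_eq x
  rw [h.map_add_mul, sub_eq_add_neg, ← neg_mul, ← map_neg, h.map_add_mul, map_neg, neg_mul,
    sub_neg_eq_add]

theorem eq_zero_of_add_mul_eq_zero (h : IsQuadraticConjugation sd τ) {p q : ℚ}
    (hpq : algebraMap ℚ K p + algebraMap ℚ K q * sd = 0) : p = 0 ∧ q = 0 := by
  have hconj := congrArg τ hpq
  rw [h.map_add_mul, map_zero] at hconj
  have hq : algebraMap ℚ K (2 * q) = 0 := by
    refine (mul_eq_zero.mp ?_).resolve_right h.ne_zero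
    rw [map_mul, map_ofNat]; linear_combination hpq - hconj
  have hq : q = 0 := by
    simpa using (map_eq_zero_iff _ (algebraMap ℚ K).injective).mp hq
  refine ⟨(map_eq_zero_iff _ (algebraMap ℚ K).injective).mp ?_, hq⟩
  simpa [hq] using hpq

theorem mem_range_of_fixed (h : IsQuadraticConjugation sd τ) {x : K} (hx : τ x = x) :
    x ∈ (algebraMap ℚ K).range := by
  obtain ⟨p, q, rfl⟩ := h.exists_eq x
  rw [h.map_add_mul] at hx
  have hq : 2 * q = 0 := by
    refine (h.eq_zero_of_add_mul_eq_zero (p := 0) ?_).2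
    rw [map_zero, zero_add, map_mul, map_ofNat]; linear_combination -hx
  exact ⟨p, by simp [show q = 0 by simpa using hq]⟩

end IsQuadraticConjugation

end Quadratic

section Exponents

variable {ι : Type*}

noncomputable def pairExpEquiv : (ι × Bool →₀ ℕ) ≃ (ι →₀ ℕ) × (ι →₀ ℕ) :=
  (Finsupp.domCongr ((Equiv.prodComm ι Bool).trans (Equiv.boolProdEquivSum ι))).toEquiv.trans
    Finsupp.sumFinsuppEquivProdFinsupp

noncomputable def pairExp (i j : ι →₀ ℕ) : ι × Bool →₀ ℕ := pairExpEquiv.symm (i, j)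

theorem pairExp_apply (i j : ι →₀ ℕ) (r : ι) (b : Bool) :
    pairExp i j (r, b) = if b then j r else i r := by
  cases b <;> rfl

theorem pairExp_inj {i j k l : ι →₀ ℕ} : pairExp i j = pairExp k l ↔ (i, j) = (k, l) :=
  pairExpEquiv.symm.injective.eq_iff

theorem exists_pairExp (μ : ι × Bool →₀ ℕ) : ∃ i j, μ = pairExp i j :=
  ⟨_, _, (pairExpEquiv.symm_apply_apply μ).symm⟩

def swapSide (p : ι × Bool) : ι × Bool := (p.1, !p.2)

theorem swapSide_injective : Function.Injective (swapSide (ι := ι)) := by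
  rintro ⟨r, b⟩ ⟨s, c⟩ h
  simpa [swapSide] using h

theorem mapDomain_swapSide_pairExp (i j : ι →₀ ℕ) :
    (pairExp i j).mapDomain swapSide = pairExp j i := by
  ext ⟨r, b⟩
  rw [show (r, b) = swapSide (r, !b) by simp [swapSide],
    Finsupp.mapDomain_apply swapSide_injective]
  cases b <;> rfl

theorem degree_pairExp [Fintype ι] (i j : ι →₀ ℕ) :
    (pairExp i j).degree = i.degree + j.degree := by
  simp only [Finsupp.degree_eq_sum, Fintype.sum_prod_type, Fintype.sum_bool, pairExp_apply,
    if_true, Bool.false_eq_true, if_false, Finset.sum_add_distrib, add_comm]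

theorem monomial_pairExp [Fintype ι] {R : Type*} [CommSemiring R] (i j : ι →₀ ℕ) :
    monomial (pairExp i j) (1 : R) = (∏ r, X (r, false) ^ i r) * ∏ r, X (r, true) ^ j r := by
  rw [monomial_eq, C_1, one_mul, Finsupp.prod_fintype _ _ fun _ => pow_zero _,
    Fintype.prod_prod_type]
  simp only [Fintype.prod_bool, pairExp_apply, if_true, Bool.false_eq_true, if_false,
    Finset.prod_mul_distrib, mul_comm]

end Exponents

section Conjugation

variable {ι K : Type*} [Field K] [Algebra ℚ K] {sd : K} {τ : K →ₐ[ℚ] K}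

noncomputable def conjPoly (τ : K →ₐ[ℚ] K) :
    MvPolynomial (ι × Bool) K →ₐ[ℚ] MvPolynomial (ι × Bool) K :=
  ((rename swapSide).restrictScalars ℚ).comp (mapAlgHom τ)

def conjPoint (τ : K →ₐ[ℚ] K) (a : ι → K) (p : ι × Bool) : K :=
  if p.2 then τ (a p.1) else a p.1

theorem conjPoly_apply (g : MvPolynomial (ι × Bool) K) :
    conjPoly τ g = rename swapSide (map τ g) := rfl

theorem conjPoly_monomial_pairExp (i j : ι →₀ ℕ) (c : K) :
    conjPoly τ (monomial (pairExp i j) c) = monomial (pairExp j i) (τ c) := by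
  rw [conjPoly_apply, map_monomial, rename_monomial, mapDomain_swapSide_pairExp]; rfl

theorem IsQuadraticConjugation.conjPoly_conjPoly (h : IsQuadraticConjugation sd τ)
    (g : MvPolynomial (ι × Bool) K) : conjPoly τ (conjPoly τ g) = g := by
  have hτ : (τ : K →+* K).comp τ = RingHom.id K := RingHom.ext h.involutive
  have hswap : swapSide ∘ swapSide = (id : ι × Bool → ι × Bool) := by
    funext p; simp [swapSide]
  rw [conjPoly_apply, conjPoly_apply, map_rename, rename_rename, map_map, hτ, map_id, hswap,
    rename_id_apply]

theorem IsQuadraticConjugation.eval_conjPoint_conjPoly (h : IsQuadraticConjugation sd τ)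
    (a : ι → K) (g : MvPolynomial (ι × Bool) K) :
    eval (conjPoint τ a) (conjPoly τ g) = τ (eval (conjPoint τ a) g) := by
  have hpt : conjPoint τ a ∘ swapSide = τ ∘ conjPoint τ a := by
    funext ⟨r, b⟩
    cases b
    · rfl
    · exact (h.involutive (a r)).symm
  have := eval₂_comp_left (τ : K →+* K) (RingHom.id K) (conjPoint τ a) g
  rw [RingHom.comp_id] at this
  rw [conjPoly_apply, eval_rename, eval_map, hpt]
  exact this.symm

theorem IsQuadraticConjugation.eq_zero_of_eval_conjPoint_eq_zero
    (h : IsQuadraticConjugation sd τ) {g : MvPolynomial (ι × Bool) K}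
    (hg : ∀ a, eval (conjPoint τ a) g = 0) : g = 0 := by
  -- `φ` maps the rational point `(u, v)` to the conjugate point of `u + v √D`; `χ` inverts it.
  set φ : ι × Bool → MvPolynomial (ι × Bool) K :=
    fun p => X (p.1, false) + X (p.1, true) * C (if p.2 then -sd else sd)
  set χ : ι × Bool → MvPolynomial (ι × Bool) K := fun p =>
    if p.2 then C (2 * sd)⁻¹ * (X (p.1, false) - X (p.1, true))
    else C 2⁻¹ * (X (p.1, false) + X (p.1, true))
  have : CharZero K := charZero_of_injective_algebraMap (algebraMap ℚ K).injective
  have hχφ : (fun p => bind₁ χ (φ p)) = X := by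
    have hhalf : (C sd * C (2 * sd)⁻¹ : MvPolynomial (ι × Bool) K) = C 2⁻¹ := by
      rw [← C_mul]; field_simp [h.ne_zero]
    have htwo : (C 2⁻¹ + C 2⁻¹ : MvPolynomial (ι × Bool) K) = 1 := by
      rw [← C_add, ← C_1]; congr 1; field_simp; norm_num
    funext ⟨r, b⟩
    cases b <;> simp only [φ, χ, map_add, map_mul, bind₁_X_right, bind₁_C_right, if_true,
      Bool.false_eq_true, if_false, map_neg]
    · linear_combination (X (r, false) - X (r, true)) * hhalf + X (r, false) * htwo
    · linear_combination (X (r, true) - X (r, false)) * hhalf + X (r, true) * htwo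
  have hφ : bind₁ φ g = 0 := by
    refine eq_zero_of_eval_algebraMap_eq_zero fun v => ?_
    convert hg fun r => algebraMap ℚ K (v (r, false)) + algebraMap ℚ K (v (r, true)) * sd
      using 1
    refine (eval₂Hom_bind₁ (RingHom.id K) _ φ g).trans (congrArg (eval · g) ?_)
    funext ⟨r, b⟩
    cases b
    · simp [φ, conjPoint]
    · simp [φ, conjPoint, h.map_sd]
  rw [← AlgHom.id_apply (R := K) g, ← bind₁_X_left, ← hχφ, ← bind₁_bind₁, hφ, map_zero]

theorem IsQuadraticConjugation.forall_eval_conjPoint_mem_range_iff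
    (h : IsQuadraticConjugation sd τ) (g : MvPolynomial (ι × Bool) K) :
    (∀ a, eval (conjPoint τ a) g ∈ (algebraMap ℚ K).range) ↔ conjPoly τ g = g := by
  constructor
  · intro hg
    rw [← sub_eq_zero]
    refine h.eq_zero_of_eval_conjPoint_eq_zero fun a => ?_
    obtain ⟨q, hq⟩ := hg a
    rw [map_sub, h.eval_conjPoint_conjPoly, ← hq, AlgHom.commutes, sub_self]
  · intro hg a
    refine h.mem_range_of_fixed ?_
    rw [← h.eval_conjPoint_conjPoly, hg]

end Conjugation

section Basis

variable {ι K : Type*} [LinearOrder ι] [Field K] [Algebra ℚ K] {sd : K} {τ : K →ₐ[ℚ] K}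

/-- The weight `1/2` on the diagonal makes `basisPoly τ sd i i = z^i τ(z)^i`. -/
def basisWeight (sd : K) (i j : ι →₀ ℕ) : K :=
  if toLex i < toLex j then 1 else if i = j then algebraMap ℚ K 2⁻¹ else -sd

theorem basisWeight_of_lt {i j : ι →₀ ℕ} (h : toLex i < toLex j) : basisWeight sd i j = 1 :=
  if_pos h

theorem basisWeight_self (i : ι →₀ ℕ) : basisWeight sd i i = algebraMap ℚ K 2⁻¹ := by
  rw [basisWeight, if_neg (lt_irrefl _), if_pos rfl]

theorem basisWeight_of_gt {i j : ι →₀ ℕ} (h : toLex j < toLex i) : basisWeight sd i j = -sd := by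
  rw [basisWeight, if_neg h.not_gt, if_neg fun hij => (hij ▸ h).false]

noncomputable def basisPoly (τ : K →ₐ[ℚ] K) (sd : K) (i j : ι →₀ ℕ) :
    MvPolynomial (ι × Bool) K :=
  monomial (pairExp i j) (basisWeight sd i j) +
    conjPoly τ (monomial (pairExp i j) (basisWeight sd i j))

theorem basisPoly_self (i : ι →₀ ℕ) : basisPoly τ sd i i = monomial (pairExp i i) 1 := by
  rw [basisPoly, conjPoly_monomial_pairExp, basisWeight_self, AlgHom.commutes, ← map_add, ← map_add]
  norm_num

theorem IsQuadraticConjugation.basisPoly_eq [Fintype ι] (h : IsQuadraticConjugation sd τ)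
    (i j : ι →₀ ℕ) :
    basisPoly τ sd i j =
      if toLex i < toLex j then
        (∏ r, X (r, false) ^ i r) * (∏ r, X (r, true) ^ j r) +
          (∏ r, X (r, false) ^ j r) * (∏ r, X (r, true) ^ i r)
      else if i = j then (∏ r, X (r, false) ^ i r) * (∏ r, X (r, true) ^ i r)
      else
        C sd * ((∏ r, X (r, false) ^ j r) * (∏ r, X (r, true) ^ i r) -
          (∏ r, X (r, false) ^ i r) * (∏ r, X (r, true) ^ j r)) := by
  simp only [← monomial_pairExp]
  split_ifs with hlt heq
  · rw [basisPoly, conjPoly_monomial_pairExp, basisWeight_of_lt hlt, map_one τ]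
  · rw [heq, basisPoly_self]
  · have hgt : toLex j < toLex i :=
      (not_lt.mp hlt).lt_of_ne fun e => heq (toLex.injective e).symm
    rw [basisPoly, conjPoly_monomial_pairExp, basisWeight_of_gt hgt, map_neg τ, h.map_sd,
      neg_neg, mul_sub, C_mul_monomial, C_mul_monomial, mul_one, map_neg]
    abel

theorem IsQuadraticConjugation.conjPoly_basisPoly (h : IsQuadraticConjugation sd τ)
    (i j : ι →₀ ℕ) :
    conjPoly τ (basisPoly τ sd i j) = basisPoly τ sd i j := by
  rw [basisPoly, map_add, h.conjPoly_conjPoly, add_comm]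

theorem totalDegree_basisPoly_le [Fintype ι] (i j : ι →₀ ℕ) :
    (basisPoly τ sd i j).totalDegree ≤ i.degree + j.degree := by
  rw [basisPoly, conjPoly_monomial_pairExp]
  refine (totalDegree_add _ _).trans (max_le ?_ ?_)
  · exact (totalDegree_monomial_le _ _).trans_eq (degree_pairExp i j)
  · exact (totalDegree_monomial_le _ _).trans_eq ((degree_pairExp j i).trans (add_comm _ _))

theorem coeff_pairExp_basisPoly (i j k l : ι →₀ ℕ) :
    coeff (pairExp i j) (basisPoly τ sd k l) =
      (if (k, l) = (i, j) then basisWeight sd k l else 0) +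
        (if (k, l) = (j, i) then τ (basisWeight sd k l) else 0) := by
  simp only [basisPoly, conjPoly_monomial_pairExp, coeff_add, coeff_monomial, pairExp_inj,
    Prod.mk.injEq, and_comm]

theorem IsQuadraticConjugation.linearIndependent_basisPoly (h : IsQuadraticConjugation sd τ) :
    LinearIndependent ℚ fun ij : (ι →₀ ℕ) × (ι →₀ ℕ) => basisPoly τ sd ij.1 ij.2 := by
  rw [linearIndependent_iff'']
  intro s c hc hsum
  have hcoeff : ∀ i j, algebraMap ℚ K (c (i, j)) * basisWeight sd i j +
      algebraMap ℚ K (c (j, i)) * τ (basisWeight sd j i) = 0 := by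
    intro i j
    have := congrArg (coeff (pairExp i j)) hsum
    simp only [coeff_sum, coeff_smul, coeff_pairExp_basisPoly, coeff_zero] at this
    simp only [Algebra.smul_def, mul_add, Finset.sum_add_distrib, mul_ite, mul_zero,
      Finset.sum_ite_eq'] at this
    have hs : ∀ x (w : K), (if x ∈ s then algebraMap ℚ K (c x) * w else 0) =
        algebraMap ℚ K (c x) * w := fun x w => by
      split_ifs with hx
      · rfl
      · rw [hc x hx, map_zero, zero_mul]
    rwa [hs, hs] at this
  rintro ⟨i, j⟩
  rcases lt_trichotomy (toLex i) (toLex j) with hij | hij | hij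
  · have := hcoeff i j
    rw [basisWeight_of_lt hij, basisWeight_of_gt hij, map_neg τ, h.map_sd, neg_neg,
      mul_one] at this
    exact (h.eq_zero_of_add_mul_eq_zero this).1
  · obtain rfl := toLex.injective hij
    have := hcoeff i i
    rw [basisWeight_self, AlgHom.commutes, ← mul_add, ← map_add, ← map_mul] at this
    linarith [(map_eq_zero_iff _ (algebraMap ℚ K).injective).mp this]
  · have := hcoeff i j
    rw [basisWeight_of_lt hij, basisWeight_of_gt hij, map_one τ, mul_one, add_comm, mul_neg,
      ← neg_mul, ← map_neg] at this
    exact neg_eq_zero.mp (h.eq_zero_of_add_mul_eq_zero this).2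

noncomputable def basisPolySpan (τ : K →ₐ[ℚ] K) (sd : K) (d : ℕ) :
    Submodule ℚ (MvPolynomial (ι × Bool) K) :=
  Submodule.span ℚ (Set.range fun ij : {ij : (ι →₀ ℕ) × (ι →₀ ℕ) //
    ij.1.degree + ij.2.degree ≤ d} => basisPoly τ sd ij.1.1 ij.1.2)

theorem IsQuadraticConjugation.monomial_add_conjPoly_mem_basisPolySpan
    (h : IsQuadraticConjugation sd τ) {d : ℕ} {i j : ι →₀ ℕ} (hij : i.degree + j.degree ≤ d)
    (c : K) :
    monomial (pairExp i j) c + conjPoly τ (monomial (pairExp i j) c) ∈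
      basisPolySpan τ sd d := by
  wlog hle : toLex i ≤ toLex j generalizing i j c
  · have := this (i := j) (j := i) (by omega) (τ c) (le_of_not_ge hle)
    rwa [← conjPoly_monomial_pairExp, h.conjPoly_conjPoly, add_comm] at this
  have hmem : ∀ k l : ι →₀ ℕ, k.degree + l.degree ≤ d → basisPoly τ sd k l ∈
      basisPolySpan τ sd d :=
    fun k l hkl => Submodule.subset_span ⟨⟨(k, l), hkl⟩, rfl⟩
  obtain ⟨p, q, rfl⟩ := h.exists_eq c
  rw [conjPoly_monomial_pairExp, h.map_add_mul]
  rcases hle.lt_or_eq with hlt | heq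
  · have hsum : monomial (pairExp i j) (algebraMap ℚ K p + algebraMap ℚ K q * sd) +
        monomial (pairExp j i) (algebraMap ℚ K p - algebraMap ℚ K q * sd) =
        p • basisPoly τ sd i j + q • basisPoly τ sd j i := by
      ext μ
      simp only [basisPoly, conjPoly_monomial_pairExp, basisWeight_of_lt hlt,
        basisWeight_of_gt hlt, map_one τ, map_neg τ, h.map_sd, neg_neg, Algebra.smul_def,
        MvPolynomial.algebraMap_apply, coeff_add, coeff_C_mul, coeff_monomial]
      split_ifs <;> ring
    rw [hsum]
    exact add_mem (Submodule.smul_mem _ p (hmem i j hij))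
      (Submodule.smul_mem _ q (hmem j i (by omega)))
  · obtain rfl := toLex.injective heq
    have hsum : monomial (pairExp i i) (algebraMap ℚ K p + algebraMap ℚ K q * sd) +
        monomial (pairExp i i) (algebraMap ℚ K p - algebraMap ℚ K q * sd) =
        (2 * p) • basisPoly τ sd i i := by
      rw [basisPoly_self, Algebra.smul_def, MvPolynomial.algebraMap_apply, C_mul_monomial,
        mul_one, ← map_add, map_mul, map_ofNat]
      ring_nf
    rw [hsum]
    exact Submodule.smul_mem _ _ (hmem i i hij)

theorem IsQuadraticConjugation.mem_basisPolySpan_iff [Fintype ι]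
    (h : IsQuadraticConjugation sd τ) {d : ℕ} {g : MvPolynomial (ι × Bool) K} :
    g ∈ basisPolySpan τ sd d ↔ g.totalDegree ≤ d ∧ conjPoly τ g = g := by
  constructor
  · intro hg
    induction hg using Submodule.span_induction with
    | mem _ hx =>
      obtain ⟨⟨⟨i, j⟩, hij⟩, rfl⟩ := hx
      exact ⟨totalDegree_basisPoly_le i j |>.trans hij, h.conjPoly_basisPoly i j⟩
    | zero => exact ⟨by rw [totalDegree_zero]; exact Nat.zero_le d, map_zero _⟩
    | add x y _ _ hx hy =>
      exact ⟨(totalDegree_add x y).trans (max_le hx.1 hy.1), by rw [map_add, hx.2, hy.2]⟩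
    | smul r x _ hx => exact ⟨(totalDegree_smul_le r x).trans hx.1, by rw [map_smul, hx.2]⟩
  · rintro ⟨hdeg, hfix⟩
    have htwo : (2 : ℚ) • g =
        ∑ μ ∈ g.support, (monomial μ (coeff μ g) + conjPoly τ (monomial μ (coeff μ g))) := by
      rw [Finset.sum_add_distrib, ← map_sum, ← as_sum, hfix, two_smul]
    refine (Submodule.smul_mem_iff _ two_ne_zero).mp (htwo ▸ Submodule.sum_mem _ fun μ hμ => ?_)
    obtain ⟨i, j, rfl⟩ := exists_pairExp μ
    exact h.monomial_add_conjPoly_mem_basisPolySpan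
      ((degree_pairExp i j).symm.trans_le ((le_totalDegree hμ).trans hdeg)) _

end Basis

open MvPolynomial in
theorem stmt_4_general (D : ℤ) (hD0 : D ≠ 0)
    (K : Type*) [Field K] [Algebra ℚ K] (sd : K) (hsd : sd ^ 2 = (D : K))
    (hgen : ∀ x : K, ∃ a b : ℚ, x = algebraMap ℚ K a + algebraMap ℚ K b * sd)
    (τ : K →ₐ[ℚ] K) (hτ : τ sd = -sd)
    (n : ℕ) (d : ℕ) :
    ∃ S : Submodule ℚ (MvPolynomial (Fin n × Bool) K),
      (S : Set (MvPolynomial (Fin n × Bool) K)) =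
        {g | g.totalDegree ≤ d ∧ ∀ a : Fin n → K,
          MvPolynomial.eval (fun p => if p.2 then τ (a p.1) else a p.1) g
            ∈ (algebraMap ℚ K).range} ∧
      ∃ B : Module.Basis {ij : (Fin n →₀ ℕ) × (Fin n →₀ ℕ) //
          (ij.1.sum fun _ m => m) + (ij.2.sum fun _ m => m) ≤ d} ℚ S,
        ∀ ij, (B ij : MvPolynomial (Fin n × Bool) K) =
          if toLex ij.val.1 < toLex ij.val.2 then
            (∏ r : Fin n, X (r, false) ^ ij.val.1 r) *
              (∏ r : Fin n, X (r, true) ^ ij.val.2 r) +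
            (∏ r : Fin n, X (r, false) ^ ij.val.2 r) *
              (∏ r : Fin n, X (r, true) ^ ij.val.1 r)
          else if ij.val.1 = ij.val.2 then
            (∏ r : Fin n, X (r, false) ^ ij.val.1 r) *
              (∏ r : Fin n, X (r, true) ^ ij.val.1 r)
          else
            C sd *
              ((∏ r : Fin n, X (r, false) ^ ij.val.2 r) *
                 (∏ r : Fin n, X (r, true) ^ ij.val.1 r) -
               (∏ r : Fin n, X (r, false) ^ ij.val.1 r) *
                 (∏ r : Fin n, X (r, true) ^ ij.val.2 r)) := by
  have : CharZero K := charZero_of_injective_algebraMap (algebraMap ℚ K).injective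
  have h : IsQuadraticConjugation sd τ := ⟨hgen, hτ, fun h0 => hD0 <| by
    rw [h0, zero_pow two_ne_zero] at hsd
    exact_mod_cast hsd.symm⟩
  refine ⟨basisPolySpan τ sd d, ?_,
    Module.Basis.span (h.linearIndependent_basisPoly.comp _ Subtype.val_injective),
    fun ij => ?_⟩
  · ext g
    exact h.mem_basisPolySpan_iff.trans
      (and_congr_right' (h.forall_eval_conjPoint_mem_range_iff g).symm)
  · exact (congrArg Subtype.val (Module.Basis.span_apply _ ij)).trans (h.basisPoly_eq _ _)

open MvPolynomial in
/-- The generalized polynomials g_{ij} (for multi-indices i, j with |i|+|j| ≤ d),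
defined by g_{ij} = z^i τ(z)^j + τ(z)^i z^j and g_{ji} = √D (z^i τ(z)^j − τ(z)^i z^j)
for i < j lexicographically, together with g_{ii} = z^i τ(z)^i, form a ℚ-basis of the
space Γ_K^{n,d} of ℚ-valued generalized polynomials of degree at most d. -/
theorem stmt_4 (D : ℤ) (hsq : Squarefree D) (hD0 : D ≠ 0) (hD1 : D ≠ 1)
    (K : Type*) [Field K] [Algebra ℚ K] (sd : K) (hsd : sd ^ 2 = (D : K))
    (hgen : ∀ x : K, ∃ a b : ℚ, x = algebraMap ℚ K a + algebraMap ℚ K b * sd)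
    (τ : K →ₐ[ℚ] K) (hτ : τ sd = -sd)
    (n : ℕ) (hn : 1 ≤ n) (d : ℕ) :
    ∃ S : Submodule ℚ (MvPolynomial (Fin n × Bool) K),
      (S : Set (MvPolynomial (Fin n × Bool) K)) =
        {g | g.totalDegree ≤ d ∧ ∀ a : Fin n → K,
          MvPolynomial.eval (fun p => if p.2 then τ (a p.1) else a p.1) g
            ∈ (algebraMap ℚ K).range} ∧
      ∃ B : Module.Basis {ij : (Fin n →₀ ℕ) × (Fin n →₀ ℕ) //
          (ij.1.sum fun _ m => m) + (ij.2.sum fun _ m => m) ≤ d} ℚ S,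
        ∀ ij, (B ij : MvPolynomial (Fin n × Bool) K) =
          if toLex ij.val.1 < toLex ij.val.2 then
            (∏ r : Fin n, X (r, false) ^ ij.val.1 r) *
              (∏ r : Fin n, X (r, true) ^ ij.val.2 r) +
            (∏ r : Fin n, X (r, false) ^ ij.val.2 r) *
              (∏ r : Fin n, X (r, true) ^ ij.val.1 r)
          else if ij.val.1 = ij.val.2 then
            (∏ r : Fin n, X (r, false) ^ ij.val.1 r) *
              (∏ r : Fin n, X (r, true) ^ ij.val.1 r)
          else
            C sd *
              ((∏ r : Fin n, X (r, false) ^ ij.val.2 r) *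
                 (∏ r : Fin n, X (r, true) ^ ij.val.1 r) -
               (∏ r : Fin n, X (r, false) ^ ij.val.1 r) *
                 (∏ r : Fin n, X (r, true) ^ ij.val.2 r)) :=
  stmt_4_general D hD0 K sd hsd hgen τ hτ n d
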